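/- Let n ≥ 3, M be positive integers with n + 1 even and gcd(n+1, 3) = 1, and suppose M³(n-1)²(n+4)⁴A⁷/(54·n⁴(n+1)²·R(n,M)) is a nonzero integer, where A = 6M - n(n+1)(n+5) and R(n,M) is the explicit degree-6 polynomial in M. Then n + 1 divides 16M². -/
import Mathlib

noncomputable def fv (p : ℕ) (x : ℤ) : ℕ := x.natAbs.factorization p

lemma fv_mul {p : ℕ} {x y : ℤ} (hx : x ≠ 0) (hy : y ≠ 0) :
    fv p (x * y) = fv p x + fv p y := by
  unfold fv
  rw [Int.natAbs_mul, Nat.factorization_mul (Int.natAbs_ne_zero.mpr hx) (Int.natAbs_ne_zero.mpr hy)]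
  simp

lemma fv_pow {p : ℕ} (x : ℤ) (k : ℕ) : fv p (x ^ k) = k * fv p x := by
  unfold fv
  rw [Int.natAbs_pow, Nat.factorization_pow]
  simp

lemma fv_dvd (p : ℕ) (x : ℤ) : (p : ℤ) ^ fv p x ∣ x := by
  have h : (p : ℕ) ^ fv p x ∣ x.natAbs := Nat.ordProj_dvd _ _
  exact Int.dvd_natAbs.mp (by exact_mod_cast Int.natCast_dvd_natCast.mpr h)

lemma fv_le {p : ℕ} (hp : p.Prime) {x : ℤ} {a : ℕ} (hx : x ≠ 0) (h : (p : ℤ) ^ a ∣ x) :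
    a ≤ fv p x := by
  have h' : (p : ℕ) ^ a ∣ x.natAbs := by
    have := Int.natAbs_dvd_natAbs.mpr h
    simpa [Int.natAbs_pow] using this
  exact (hp.pow_dvd_iff_le_factorization (Int.natAbs_ne_zero.mpr hx)).mp h'

lemma fv_notdvd {p : ℕ} (hp : p.Prime) {x : ℤ} (hx : x ≠ 0) :
    ¬ (p : ℤ) ^ (fv p x + 1) ∣ x := fun h => by
  have := fv_le hp hx h; omega

lemma fv_eq {p : ℕ} (hp : p.Prime) {x : ℤ} {a : ℕ} (hx : x ≠ 0)
    (h1 : (p : ℤ) ^ a ∣ x) (h2 : ¬ (p : ℤ) ^ (a + 1) ∣ x) : fv p x = a := by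
  have hle := fv_le hp hx h1
  by_contra hne
  have : a + 1 ≤ fv p x := by omega
  exact h2 ((pow_dvd_pow _ this).trans (fv_dvd p x))

lemma hstep {p : ℤ} {a b : ℕ} (hab : a ≤ b) {x t : ℤ} (h : p ^ b ∣ x) (ht : x ∣ t) :
    p ^ a ∣ t := ((pow_dvd_pow p hab).trans h).trans ht

theorem stmt (n M : ℤ) (hn : 3 ≤ n) (hM : 0 < M)
    (A : ℤ) (hA : A = 6*M - n*(n+1)*(n+5))
    (R : ℤ) (hR : R = 2^14*3^6*M^6 - 2^13*3^7*n*(n+1)*(n+3)*M^5 + 2^9*3^5*n^2*(n+1)*(n^4+93*n^3+629*n^2+1339*n+818)*M^4 - 2^7*3^4*n^3*(n+1)^2*(13*n^5+436*n^4+3688*n^3+12782*n^2+19163*n+9998)*M^3 + 2^2*3^3*n^4*(n+1)^3*(n+2)*(n+7)^2*(5*n^4+447*n^3+3303*n^2+7873*n+5652)*M^2 - 2^2*3^3*n^5*(n+1)^4*(n+2)^2*(n+5)^2*(n+7)^3*(3*n+5)*M + n^6*(n+1)^5*(n+2)^3*(n+5)^3*(n+7)^4)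
    (hint : ∃ k : ℤ, k ≠ 0 ∧
      ((M^3*(n-1)^2*(n+4)^4*A^7 : ℚ) / (54*n^4*(n+1)^2*R) = (k : ℚ))) (heven : Even (n+1)) (hgcd3 : Int.gcd (n+1) 3 = 1) :
    (n + 1) ∣ 16 * M^2 := by
  obtain ⟨k, hk0, hkq⟩ := hint
  have hM0 : M ≠ 0 := hM.ne'
  have hn1 : (n:ℤ) + 1 ≠ 0 := by omega
  have hnz : (n:ℤ) ≠ 0 := by omega
  have hn_1 : (n:ℤ) - 1 ≠ 0 := by omega
  have hn4 : (n:ℤ) + 4 ≠ 0 := by omega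
  have hD0 : ((54:ℚ)*(n:ℚ)^4*((n:ℚ)+1)^2*(R:ℚ)) ≠ 0 := by
    intro h
    rw [h, div_zero] at hkq
    exact hk0 (by exact_mod_cast hkq.symm)
  have hR0 : R ≠ 0 := by
    intro h
    apply hD0
    rw [h]
    push_cast
    ring
  have hEq : M^3*(n-1)^2*(n+4)^4*A^7 = 54*n^4*(n+1)^2*R*k := by
    have h' := (div_eq_iff hD0).mp hkq
    have h'' : M^3*(n-1)^2*(n+4)^4*A^7 = k*(54*n^4*(n+1)^2*R) := by exact_mod_cast h'
    rw [h'']; ring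
  have hRHSne : (54:ℤ)*n^4*(n+1)^2*R*k ≠ 0 := by
    apply mul_ne_zero _ hk0
    apply mul_ne_zero _ hR0
    apply mul_ne_zero _ (pow_ne_zero _ hn1)
    exact mul_ne_zero (by norm_num) (pow_ne_zero _ hnz)
  have hA0 : A ≠ 0 := by
    intro h
    apply hRHSne
    rw [← hEq, h]
    ring
  have hLHSne : M^3*(n-1)^2*(n+4)^4*A^7 ≠ 0 :=
    mul_ne_zero (mul_ne_zero (mul_ne_zero (pow_ne_zero _ hM0) (pow_ne_zero _ hn_1))
      (pow_ne_zero _ hn4)) (pow_ne_zero _ hA0)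
  have h16M : (16*M^2 : ℤ) ≠ 0 := by positivity
  rw [← Int.natAbs_dvd_natAbs,
    ← Nat.factorization_le_iff_dvd (Int.natAbs_ne_zero.mpr hn1) (Int.natAbs_ne_zero.mpr h16M),
    Finsupp.le_def]
  intro p
  show fv p (n+1) ≤ fv p (16*M^2)
  by_cases hp : p.Prime
  case neg =>
    unfold fv
    rw [Nat.factorization_eq_zero_of_not_prime _ hp]
    omega
  set e := fv p (n+1) with hedef
  set m := fv p M with hmdef
  rcases Nat.eq_zero_or_pos e with he0 | hepos
  · omega
  have hpz : Prime (p:ℤ) := by rw [Int.prime_iff_natAbs_prime]; simpa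
  have he_dvd : (p:ℤ)^e ∣ n+1 := fv_dvd p (n+1)
  have hm_dvd : (p:ℤ)^m ∣ M := fv_dvd p M
  have hpdvd : (p:ℤ) ∣ n+1 := (dvd_pow_self (p:ℤ) (by omega : e ≠ 0)).trans he_dvd
  have hp3 : p ≠ 3 := by
    intro h
    subst h
    obtain ⟨u, v, huv⟩ := Int.isCoprime_iff_gcd_eq_one.mpr hgcd3
    have h3 : (3:ℤ) ∣ 1 := by
      rw [← huv]
      exact dvd_add (Dvd.dvd.mul_left (by exact_mod_cast hpdvd) u) ⟨v, by ring⟩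
    norm_num at h3
  have hfv16 : fv p (16*M^2 : ℤ) = fv p 16 + 2*m := by
    rw [fv_mul (by norm_num) (pow_ne_zero _ hM0), fv_pow]
  -- valuation of LHS pieces helper
  have hfvLHS : ∀ a b c : ℕ, fv p (n-1) = a → fv p (n+4) = b → fv p A = c →
      fv p (M^3*(n-1)^2*(n+4)^4*A^7) = 3*m + 2*a + 4*b + 7*c := by
    intro a b c h1 h2 h3
    rw [fv_mul (mul_ne_zero (mul_ne_zero (pow_ne_zero _ hM0) (pow_ne_zero _ hn_1))
        (pow_ne_zero _ hn4)) (pow_ne_zero _ hA0),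
      fv_mul (mul_ne_zero (pow_ne_zero _ hM0) (pow_ne_zero _ hn_1)) (pow_ne_zero _ hn4),
      fv_mul (pow_ne_zero _ hM0) (pow_ne_zero _ hn_1),
      fv_pow, fv_pow, fv_pow, fv_pow, h1, h2, h3, ← hmdef]
  rcases eq_or_ne p 2 with hp2 | hp2
  · -- p = 2
    subst hp2
    have hfv16' : fv 2 (16:ℤ) = 4 := by
      apply fv_eq hp (by norm_num)
      · norm_num
      · norm_num
    rw [hfv16, hfv16']
    by_contra hcon
    have hem : 2*m + 5 ≤ e := by omega
    have he_dvd' : (2:ℤ)^e ∣ n+1 := by exact_mod_cast he_dvd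
    have hm_dvd' : (2:ℤ)^m ∣ M := by exact_mod_cast hm_dvd
    have h32 : (32:ℤ) ∣ n+1 := by
      have : ((2:ℤ))^5 ∣ (2:ℤ)^e := pow_dvd_pow _ (by omega)
      exact (by norm_num : (32:ℤ) = 2^5) ▸ this.trans he_dvd'
    obtain ⟨s, hs⟩ := h32
    have hns : n = 32*s - 1 := by omega
    subst hns
    -- exact valuations
    have hfn1 : fv 2 (32*s-1-1 : ℤ) = 1 := by
      apply fv_eq hp hn_1
      · exact_mod_cast (⟨16*s-1, by ring⟩ : (2:ℤ)^1 ∣ 32*s-1-1)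
      · intro hdd
        have hdd' : (4:ℤ) ∣ 32*s-1-1 := by
          have : ((2:ℕ):ℤ)^(1+1) = 4 := by norm_num
          rwa [this] at hdd
        obtain ⟨t, ht⟩ := hdd'
        omega
    have hfn4 : fv 2 (32*s-1+4 : ℤ) = 0 := by
      apply fv_eq hp hn4
      · simp
      · intro hdd
        have hdd' : (2:ℤ) ∣ 32*s-1+4 := by
          have : ((2:ℕ):ℤ)^(0+1) = 2 := by norm_num
          rwa [this] at hdd
        obtain ⟨t, ht⟩ := hdd'
        omega
    have hAd : (2:ℤ)^(m+1) ∣ A := by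
      rw [hA]
      apply dvd_sub
      · rw [pow_succ]
        rw [show (6:ℤ)*M = (3*M)*2 by ring]
        exact mul_dvd_mul (hm_dvd'.mul_left 3) dvd_rfl
      · have h1 : (2:ℤ)^(m+1) ∣ (32*s-1)+1 := (pow_dvd_pow _ (by omega)).trans he_dvd'
        exact (h1.mul_left _).mul_right _
    have hAnd : ¬ (2:ℤ)^(m+1+1) ∣ A := by
      intro hdd
      have h1 : (2:ℤ)^(m+2) ∣ (32*s-1)*((32*s-1)+1)*((32*s-1)+5) := by
        have h2 : (2:ℤ)^(m+2) ∣ (32*s-1)+1 := (pow_dvd_pow _ (by omega)).trans he_dvd'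
        exact (h2.mul_left _).mul_right _
      have h6M : (2:ℤ)^(m+2) ∣ 6*M := by
        have := dvd_add hdd h1
        rwa [show A + (32*s-1)*((32*s-1)+1)*((32*s-1)+5) = 6*M by rw [hA]; ring] at this
      rw [show (6:ℤ)*M = 2*(3*M) by ring, show m+2 = 1+(m+1) by omega, pow_add, pow_one] at h6M
      have h3M : (2:ℤ)^(m+1) ∣ 3*M := (mul_dvd_mul_iff_left (by norm_num : (2:ℤ) ≠ 0)).mp h6M
      have hMd : (2:ℤ)^(m+1) ∣ M :=
        Int.prime_two.pow_dvd_of_dvd_mul_left _ (by norm_num) h3M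
      exact fv_notdvd hp hM0 (by exact_mod_cast hMd)
    have hfA : fv 2 A = m + 1 := fv_eq hp hA0 (by exact_mod_cast hAd) (by exact_mod_cast hAnd)
    have hLv : fv 2 (M^3*(32*s-1-1)^2*(32*s-1+4)^4*A^7) = 10*m + 9 := by
      rw [hfvLHS 1 0 (m+1) hfn1 hfn4 hfA]; ring
    -- divisibility of R by 2^(14+6m)
    have hmm : ∀ j : ℕ, (2:ℤ)^(j*m) ∣ M^j := by
      intro j
      rw [mul_comm, pow_mul]
      exact pow_dvd_pow_of_dvd hm_dvd' j
    have hee : ∀ j : ℕ, (2:ℤ)^(j*e) ∣ ((32*s-1)+1)^j := by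
      intro j
      rw [mul_comm, pow_mul]
      exact pow_dvd_pow_of_dvd he_dvd' j
    have hRd : (2:ℤ)^(14+6*m) ∣ R := by
      rw [hR]
      apply dvd_add
      apply dvd_sub
      apply dvd_add
      apply dvd_sub
      apply dvd_add
      apply dvd_sub
      -- t1
      · refine hstep (le_refl _) ?_
          (⟨3^6, by ring⟩ : (2:ℤ)^14*M^6 ∣ 2^14*3^6*M^6)
        rw [pow_add]
        exact mul_dvd_mul_left _ (hmm 6)
      -- t2
      · refine hstep (show 14+6*m ≤ 13+(e+(1+5*m)) by omega) ?_
          (⟨3^7*(32*s-1), by ring⟩ :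
            (2:ℤ)^13*((32*s-1+1)*((32*s-1+3)*M^5)) ∣ 2^13*3^7*(32*s-1)*(32*s-1+1)*(32*s-1+3)*M^5)
        rw [pow_add, pow_add, pow_add]
        exact mul_dvd_mul_left _ (mul_dvd_mul he_dvd'
          (mul_dvd_mul (⟨16*s+1, by ring⟩ : (2:ℤ)^1 ∣ 32*s-1+3) (hmm 5)))
      -- t3
      · refine hstep (show 14+6*m ≤ 9+(e+(4+4*m)) by omega) ?_
          (⟨3^5*(32*s-1)^2, by ring⟩ :
            (2:ℤ)^9*((32*s-1+1)*(((32*s-1)^4+93*(32*s-1)^3+629*(32*s-1)^2+1339*(32*s-1)+818)*M^4)) ∣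
              2^9*3^5*(32*s-1)^2*(32*s-1+1)*((32*s-1)^4+93*(32*s-1)^3+629*(32*s-1)^2+1339*(32*s-1)+818)*M^4)
        rw [pow_add, pow_add, pow_add]
        refine mul_dvd_mul_left _ (mul_dvd_mul he_dvd' (mul_dvd_mul ?_ (hmm 4)))
        exact ⟨65536*s^4+182272*s^3+22784*s^2+712*s+1, by ring⟩
      -- t4
      · refine hstep (show 14+6*m ≤ 7+(2*e+(5+3*m)) by omega) ?_
          (⟨3^4*(32*s-1)^3, by ring⟩ :
            (2:ℤ)^7*((32*s-1+1)^2*((13*(32*s-1)^5+436*(32*s-1)^4+3688*(32*s-1)^3+12782*(32*s-1)^2+19163*(32*s-1)+9998)*M^3)) ∣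
              2^7*3^4*(32*s-1)^3*(32*s-1+1)^2*(13*(32*s-1)^5+436*(32*s-1)^4+3688*(32*s-1)^3+12782*(32*s-1)^2+19163*(32*s-1)+9998)*M^3)
        rw [pow_add, pow_add, pow_add]
        refine mul_dvd_mul_left _ (mul_dvd_mul (hee 2) (mul_dvd_mul ?_ (hmm 3)))
        exact ⟨13631488*s^5+12156928*s^4+2123776*s^3+134528*s^2+2984*s+11, by ring⟩
      -- t5
      · refine hstep (show 14+6*m ≤ 2+(3*e+(2+(5+2*m))) by omega) ?_
          (⟨3^3*(32*s-1)^4*(32*s-1+2), by ring⟩ :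
            (2:ℤ)^2*((32*s-1+1)^3*((32*s-1+7)^2*((5*(32*s-1)^4+447*(32*s-1)^3+3303*(32*s-1)^2+7873*(32*s-1)+5652)*M^2))) ∣
              2^2*3^3*(32*s-1)^4*(32*s-1+1)^3*(32*s-1+2)*(32*s-1+7)^2*(5*(32*s-1)^4+447*(32*s-1)^3+3303*(32*s-1)^2+7873*(32*s-1)+5652)*M^2)
        rw [pow_add, pow_add, pow_add, pow_add]
        refine mul_dvd_mul_left _ (mul_dvd_mul (hee 3) (mul_dvd_mul ?_ (mul_dvd_mul ?_ (hmm 2))))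
        · exact pow_dvd_pow_of_dvd (⟨16*s+3, by ring⟩ : (2:ℤ) ∣ 32*s-1+7) 2
        · exact ⟨163840*s^4+437248*s^3+63744*s^2+2588*s+20, by ring⟩
      -- t6
      · refine hstep (show 14+6*m ≤ 2+(4*e+(4+(3+(1+m)))) by omega) ?_
          (⟨3^3*(32*s-1)^5*(32*s-1+2)^2, by ring⟩ :
            (2:ℤ)^2*((32*s-1+1)^4*((32*s-1+5)^2*((32*s-1+7)^3*((3*(32*s-1)+5)*M)))) ∣
              2^2*3^3*(32*s-1)^5*(32*s-1+1)^4*(32*s-1+2)^2*(32*s-1+5)^2*(32*s-1+7)^3*(3*(32*s-1)+5)*M)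
        rw [pow_add, pow_add, pow_add, pow_add, pow_add]
        refine mul_dvd_mul_left _ (mul_dvd_mul (hee 4) (mul_dvd_mul ?_
          (mul_dvd_mul ?_ (mul_dvd_mul (⟨48*s+1, by ring⟩ : (2:ℤ)^1 ∣ 3*(32*s-1)+5) hm_dvd'))))
        · rw [show (4:ℕ) = 2*2 from rfl, pow_mul]
          exact pow_dvd_pow_of_dvd (⟨8*s+1, by ring⟩ : (2:ℤ)^2 ∣ 32*s-1+5) 2
        · exact pow_dvd_pow_of_dvd (⟨16*s+3, by ring⟩ : (2:ℤ) ∣ 32*s-1+7) 3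
      -- t7
      · refine hstep (show 14+6*m ≤ 5*e+(6+4) by omega) ?_
          (⟨(32*s-1)^6*(32*s-1+2)^3, by ring⟩ :
            ((32*s-1+1)^5*((32*s-1+5)^3*(32*s-1+7)^4) : ℤ) ∣
              (32*s-1)^6*(32*s-1+1)^5*(32*s-1+2)^3*(32*s-1+5)^3*(32*s-1+7)^4)
        rw [pow_add, pow_add]
        refine mul_dvd_mul (hee 5) (mul_dvd_mul ?_ ?_)
        · rw [show (6:ℕ) = 2*3 from rfl, pow_mul]
          exact pow_dvd_pow_of_dvd (⟨8*s+1, by ring⟩ : (2:ℤ)^2 ∣ 32*s-1+5) 3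
        · exact pow_dvd_pow_of_dvd (⟨16*s+3, by ring⟩ : (2:ℤ) ∣ 32*s-1+7) 4
    have hbig : (2:ℤ)^(10*m+10) ∣ M^3*(32*s-1-1)^2*(32*s-1+4)^4*A^7 := by
      rw [hEq]
      refine hstep (show 10*m+10 ≤ 1+(2*e+(14+6*m)) by omega) ?_
        (⟨27*(32*s-1)^4*k, by ring⟩ :
          (2:ℤ)*(((32*s-1)+1)^2*R) ∣ 54*(32*s-1)^4*((32*s-1)+1)^2*R*k)
      rw [pow_add, pow_add, pow_one]
      exact mul_dvd_mul_left _ (mul_dvd_mul (hee 2) hRd)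
    have := fv_le hp hLHSne (by exact_mod_cast hbig)
    rw [hLv] at this
    omega
  · -- p odd
    suffices h : e ≤ 2*m by omega
    by_contra hcon
    have hem : 2*m + 1 ≤ e := by omega
    have hpne2 : ¬ (p:ℤ) ∣ 2 := by
      intro hdd
      have h2 : p ∣ 2 := by exact_mod_cast hdd
      exact hp2 ((Nat.prime_dvd_prime_iff_eq hp Nat.prime_two).mp h2)
    have hpne3 : ¬ (p:ℤ) ∣ 3 := by
      intro hdd
      have h2 : p ∣ 3 := by exact_mod_cast hdd
      exact hp3 ((Nat.prime_dvd_prime_iff_eq hp Nat.prime_three).mp h2)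
    have hfn1 : fv p (n-1) = 0 := by
      apply fv_eq hp hn_1 (by simp)
      intro hdd
      rw [zero_add, pow_one] at hdd
      exact hpne2 (by have := dvd_sub hpdvd hdd; simpa using this)
    have hfn4 : fv p (n+4) = 0 := by
      apply fv_eq hp hn4 (by simp)
      intro hdd
      rw [zero_add, pow_one] at hdd
      exact hpne3 (by have := dvd_sub hdd hpdvd; simpa using this)
    have hnn : ∀ j : ℕ, j ≤ e → (p:ℤ)^j ∣ n*(n+1)*(n+5) := by
      intro j hj
      exact ((((pow_dvd_pow _ hj).trans he_dvd).mul_left n).mul_right _)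
    have hAd : (p:ℤ)^m ∣ A := by
      rw [hA]
      exact dvd_sub (hm_dvd.mul_left 6) (hnn m (by omega))
    have hAnd : ¬ (p:ℤ)^(m+1) ∣ A := by
      intro hdd
      have h6M : (p:ℤ)^(m+1) ∣ 6*M := by
        have := dvd_add hdd (hnn (m+1) (by omega))
        rwa [show A + n*(n+1)*(n+5) = 6*M by rw [hA]; ring] at this
      have hMd : (p:ℤ)^(m+1) ∣ M := by
        refine hpz.pow_dvd_of_dvd_mul_left _ ?_ h6M
        intro h6
        rcases (hpz.dvd_mul.mp (by rwa [show (6:ℤ) = 2*3 by norm_num] at h6)) with h | h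
        · exact hpne2 h
        · exact hpne3 h
      exact fv_notdvd hp hM0 hMd
    have hfA : fv p A = m := fv_eq hp hA0 hAd hAnd
    have hLv : fv p (M^3*(n-1)^2*(n+4)^4*A^7) = 10*m := by
      rw [hfvLHS 0 0 m hfn1 hfn4 hfA]; ring
    have hmm : ∀ j : ℕ, (p:ℤ)^(j*m) ∣ M^j := by
      intro j
      rw [mul_comm, pow_mul]
      exact pow_dvd_pow_of_dvd hm_dvd j
    have hee : ∀ j : ℕ, (p:ℤ)^(j*e) ∣ (n+1)^j := by
      intro j
      rw [mul_comm, pow_mul]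
      exact pow_dvd_pow_of_dvd he_dvd j
    have hRd : (p:ℤ)^(6*m) ∣ R := by
      rw [hR]
      apply dvd_add
      apply dvd_sub
      apply dvd_add
      apply dvd_sub
      apply dvd_add
      apply dvd_sub
      · exact hstep (le_refl _) (hmm 6) ⟨2^14*3^6, by ring⟩
      · refine hstep (show 6*m ≤ 1*e+5*m by omega) ?_
          (⟨2^13*3^7*n*(n+3), by ring⟩ : (n+1)^1*M^5 ∣ 2^13*3^7*n*(n+1)*(n+3)*M^5)
        rw [pow_add]
        exact mul_dvd_mul (hee 1) (hmm 5)
      · refine hstep (show 6*m ≤ 1*e+4*m by omega) ?_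
          (⟨2^9*3^5*n^2*(n^4+93*n^3+629*n^2+1339*n+818), by ring⟩ :
            (n+1)^1*M^4 ∣ 2^9*3^5*n^2*(n+1)*(n^4+93*n^3+629*n^2+1339*n+818)*M^4)
        rw [pow_add]
        exact mul_dvd_mul (hee 1) (hmm 4)
      · refine hstep (show 6*m ≤ 2*e+3*m by omega) ?_
          (⟨2^7*3^4*n^3*(13*n^5+436*n^4+3688*n^3+12782*n^2+19163*n+9998), by ring⟩ :
            (n+1)^2*M^3 ∣ 2^7*3^4*n^3*(n+1)^2*(13*n^5+436*n^4+3688*n^3+12782*n^2+19163*n+9998)*M^3)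
        rw [pow_add]
        exact mul_dvd_mul (hee 2) (hmm 3)
      · refine hstep (show 6*m ≤ 3*e+2*m by omega) ?_
          (⟨2^2*3^3*n^4*(n+2)*(n+7)^2*(5*n^4+447*n^3+3303*n^2+7873*n+5652), by ring⟩ :
            (n+1)^3*M^2 ∣ 2^2*3^3*n^4*(n+1)^3*(n+2)*(n+7)^2*(5*n^4+447*n^3+3303*n^2+7873*n+5652)*M^2)
        rw [pow_add]
        exact mul_dvd_mul (hee 3) (hmm 2)
      · refine hstep (show 6*m ≤ 4*e+1*m by omega) ?_
          (⟨2^2*3^3*n^5*(n+2)^2*(n+5)^2*(n+7)^3*(3*n+5), by ring⟩ :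
            (n+1)^4*M^1 ∣ 2^2*3^3*n^5*(n+1)^4*(n+2)^2*(n+5)^2*(n+7)^3*(3*n+5)*M)
        rw [pow_add]
        exact mul_dvd_mul (hee 4) (hmm 1)
      · refine hstep (show 6*m ≤ 5*e by omega) (hee 5)
          ⟨n^6*(n+2)^3*(n+5)^3*(n+7)^4, by ring⟩
    have hbig : (p:ℤ)^(2*e+6*m) ∣ M^3*(n-1)^2*(n+4)^4*A^7 := by
      rw [hEq]
      refine hstep (le_refl _) ?_
        (⟨54*n^4*k, by ring⟩ : (n+1)^2*R ∣ 54*n^4*(n+1)^2*R*k)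
      rw [pow_add]
      exact mul_dvd_mul (hee 2) hRd
    have := fv_le hp hLHSne hbig
    rw [hLv] at this
    omega
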